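/- Let (A, ≺, ≻, α_A, β_A) be a BiHom-dendriform algebra, M a vector space with commuting linear maps α_M, β_M and four operations a≻m, a≺m, m≻a, m≺a. Define on A⊕M: (a+m)≺(b+n) = a≺b + a≺n + m≺b and (a+m)≻(b+n) = a≻b + a≻n + m≻b. Then (A⊕M, ≺, ≻, α_A⊕α_M, β_A⊕β_M) is a BiHom-dendriform algebra if and only if (M, ≺, ≻, α_M, β_M) is a BiHom-dendriform bimodule over (A, ≺, ≻, α_A, β_A). -/
import Mathlib


/-- BiHom-dendriform algebra `(A, ≺ = p, ≻ = s, α, β)`. -/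
def BHDendAlg {K A : Type*} [Field K] [AddCommGroup A] [Module K A]
    (p s : A →ₗ[K] A →ₗ[K] A) (α β : A →ₗ[K] A) : Prop :=
  (∀ a, α (β a) = β (α a)) ∧
  (∀ a b, α (p a b) = p (α a) (α b)) ∧ (∀ a b, α (s a b) = s (α a) (α b)) ∧
  (∀ a b, β (p a b) = p (β a) (β b)) ∧ (∀ a b, β (s a b) = s (β a) (β b)) ∧
  (∀ a b c, p (p a b) (β c) = p (α a) (p b c) + p (α a) (s b c)) ∧
  (∀ a b c, s (α a) (p b c) = p (s a b) (β c)) ∧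
  (∀ a b c, s (α a) (s b c) = s (p a b) (β c) + s (s a b) (β c))

/-- BiHom-dendriform bimodule over `(A, p, s, α, β)`:
`pl, sl : A ⊗ M → M` are `a ≺ m`, `a ≻ m`; `pr, sr : M ⊗ A → M` are `m ≺ a`, `m ≻ a`. -/
def BHDendBimod {K A M : Type*} [Field K] [AddCommGroup A] [Module K A]
    [AddCommGroup M] [Module K M]
    (p s : A →ₗ[K] A →ₗ[K] A) (α β : A →ₗ[K] A)
    (pl sl : A →ₗ[K] M →ₗ[K] M) (pr sr : M →ₗ[K] A →ₗ[K] M)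
    (αM βM : M →ₗ[K] M) : Prop :=
  (∀ m, αM (βM m) = βM (αM m)) ∧
  (∀ a m, αM (pl a m) = pl (α a) (αM m)) ∧ (∀ m a, αM (pr m a) = pr (αM m) (α a)) ∧
  (∀ a m, αM (sl a m) = sl (α a) (αM m)) ∧ (∀ m a, αM (sr m a) = sr (αM m) (α a)) ∧
  (∀ a m, βM (pl a m) = pl (β a) (βM m)) ∧ (∀ m a, βM (pr m a) = pr (βM m) (β a)) ∧
  (∀ a m, βM (sl a m) = sl (β a) (βM m)) ∧ (∀ m a, βM (sr m a) = sr (βM m) (β a)) ∧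
  (∀ a b m, pl (p a b) (βM m) = pl (α a) (pl b m) + pl (α a) (sl b m)) ∧
  (∀ a b m, sl (α a) (pl b m) = pl (s a b) (βM m)) ∧
  (∀ a b m, sl (α a) (sl b m) = sl (p a b) (βM m) + sl (s a b) (βM m)) ∧
  (∀ a m b, pr (pl a m) (β b) = pl (α a) (pr m b) + pl (α a) (sr m b)) ∧
  (∀ a m b, sl (α a) (pr m b) = pr (sl a m) (β b)) ∧
  (∀ a m b, sl (α a) (sr m b) = sr (pl a m) (β b) + sr (sl a m) (β b)) ∧
  (∀ m a b, pr (pr m a) (β b) = pr (αM m) (p a b) + pr (αM m) (s a b)) ∧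
  (∀ m a b, sr (αM m) (p a b) = pr (sr m a) (β b)) ∧
  (∀ m a b, sr (αM m) (s a b) = sr (pr m a) (β b) + sr (sr m a) (β b))

/-- the componentwise dendriform operations on `A ⊕ M` form a
BiHom-dendriform algebra iff `M` is a BiHom-dendriform bimodule over `A`. -/
theorem stmt7 (K A M : Type*) [Field K] [AddCommGroup A] [Module K A]
    [AddCommGroup M] [Module K M]
    (p s : A →ₗ[K] A →ₗ[K] A) (α β : A →ₗ[K] A)
    (pl sl : A →ₗ[K] M →ₗ[K] M) (pr sr : M →ₗ[K] A →ₗ[K] M)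
    (αM βM : M →ₗ[K] M)
    (hA : BHDendAlg p s α β)
    (hM : ∀ m, αM (βM m) = βM (αM m))
    (pP sP : A × M →ₗ[K] A × M →ₗ[K] A × M)
    (hpP : ∀ (a : A) (m : M) (b : A) (n : M), pP (a, m) (b, n) = (p a b, pl a n + pr m b))
    (hsP : ∀ (a : A) (m : M) (b : A) (n : M), sP (a, m) (b, n) = (s a b, sl a n + sr m b))
    (αP βP : A × M →ₗ[K] A × M)
    (hαP : ∀ (a : A) (m : M), αP (a, m) = (α a, αM m))
    (hβP : ∀ (a : A) (m : M), βP (a, m) = (β a, βM m)) :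
    BHDendAlg pP sP αP βP ↔ BHDendBimod p s α β pl sl pr sr αM βM := by
  obtain ⟨hAc, hAαp, hAαs, hAβp, hAβs, hA1, hA2, hA3⟩ := hA
  constructor
  · rintro ⟨-, h2, h3, h4, h5, h6, h7, h8⟩
    refine ⟨hM, ?_, ?_, ?_, ?_, ?_, ?_, ?_, ?_, ?_, ?_, ?_, ?_, ?_, ?_, ?_, ?_, ?_⟩
    · intro a m
      have h := h2 (a, (0:M)) ((0:A), m)
      simpa [hpP, hαP, Prod.ext_iff] using h
    · intro m a
      have h := h2 ((0:A), m) (a, (0:M))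
      simpa [hpP, hαP, Prod.ext_iff] using h
    · intro a m
      have h := h3 (a, (0:M)) ((0:A), m)
      simpa [hsP, hαP, Prod.ext_iff] using h
    · intro m a
      have h := h3 ((0:A), m) (a, (0:M))
      simpa [hsP, hαP, Prod.ext_iff] using h
    · intro a m
      have h := h4 (a, (0:M)) ((0:A), m)
      simpa [hpP, hβP, Prod.ext_iff] using h
    · intro m a
      have h := h4 ((0:A), m) (a, (0:M))
      simpa [hpP, hβP, Prod.ext_iff] using h
    · intro a m
      have h := h5 (a, (0:M)) ((0:A), m)
      simpa [hsP, hβP, Prod.ext_iff] using h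
    · intro m a
      have h := h5 ((0:A), m) (a, (0:M))
      simpa [hsP, hβP, Prod.ext_iff] using h
    · intro a b m
      have h := h6 (a, (0:M)) (b, (0:M)) ((0:A), m)
      simpa [hpP, hsP, hαP, hβP, Prod.ext_iff] using congrArg Prod.snd h
    · intro a b m
      have h := h7 (a, (0:M)) (b, (0:M)) ((0:A), m)
      simpa [hpP, hsP, hαP, hβP, Prod.ext_iff] using congrArg Prod.snd h
    · intro a b m
      have h := h8 (a, (0:M)) (b, (0:M)) ((0:A), m)
      simpa [hpP, hsP, hαP, hβP, Prod.ext_iff] using congrArg Prod.snd h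
    · intro a m b
      have h := h6 (a, (0:M)) ((0:A), m) (b, (0:M))
      simpa [hpP, hsP, hαP, hβP, Prod.ext_iff] using congrArg Prod.snd h
    · intro a m b
      have h := h7 (a, (0:M)) ((0:A), m) (b, (0:M))
      simpa [hpP, hsP, hαP, hβP, Prod.ext_iff] using congrArg Prod.snd h
    · intro a m b
      have h := h8 (a, (0:M)) ((0:A), m) (b, (0:M))
      simpa [hpP, hsP, hαP, hβP, Prod.ext_iff] using congrArg Prod.snd h
    · intro m a b
      have h := h6 ((0:A), m) (a, (0:M)) (b, (0:M))
      simpa [hpP, hsP, hαP, hβP, Prod.ext_iff] using congrArg Prod.snd h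
    · intro m a b
      have h := h7 ((0:A), m) (a, (0:M)) (b, (0:M))
      simpa [hpP, hsP, hαP, hβP, Prod.ext_iff] using congrArg Prod.snd h
    · intro m a b
      have h := h8 ((0:A), m) (a, (0:M)) (b, (0:M))
      simpa [hpP, hsP, hαP, hβP, Prod.ext_iff] using congrArg Prod.snd h
  · rintro ⟨hc, hαpl, hαpr, hαsl, hαsr, hβpl, hβpr, hβsl, hβsr,
      hb1, hb2, hb3, hb4, hb5, hb6, hb7, hb8, hb9⟩
    refine ⟨?_, ?_, ?_, ?_, ?_, ?_, ?_, ?_⟩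
    · rintro ⟨a, m⟩
      simp [hαP, hβP, hAc, hc]
    · rintro ⟨a, m⟩ ⟨b, n⟩
      simp [hpP, hαP, hAαp, hαpl, hαpr]
    · rintro ⟨a, m⟩ ⟨b, n⟩
      simp [hsP, hαP, hAαs, hαsl, hαsr]
    · rintro ⟨a, m⟩ ⟨b, n⟩
      simp [hpP, hβP, hAβp, hβpl, hβpr]
    · rintro ⟨a, m⟩ ⟨b, n⟩
      simp [hsP, hβP, hAβs, hβsl, hβsr]
    · rintro ⟨a, m⟩ ⟨b, n⟩ ⟨c, q⟩
      simp only [hpP, hsP, hβP, hαP, map_add, LinearMap.add_apply, Prod.mk_add_mk,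
        Prod.ext_iff, hA1, hb1, hb4, hb7]
      exact ⟨trivial, by abel⟩
    · rintro ⟨a, m⟩ ⟨b, n⟩ ⟨c, q⟩
      simp only [hpP, hsP, hβP, hαP, map_add, LinearMap.add_apply, Prod.mk_add_mk,
        Prod.ext_iff, hA2, hb2, hb5, hb8]
      exact ⟨trivial, by abel⟩
    · rintro ⟨a, m⟩ ⟨b, n⟩ ⟨c, q⟩
      simp only [hpP, hsP, hβP, hαP, map_add, LinearMap.add_apply, Prod.mk_add_mk,
        Prod.ext_iff, hA3, hb3, hb6, hb9]
      exact ⟨trivial, by abel⟩
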